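/- Fix integers A, a and a positive integer C with 0 ≤ a ≤ 3 and gcd(A,C) = 1, and let r = 1 if a is even and r = 2 if a is odd. If h/k ∈ S_α (with h odd, k ∈ ℕ, gcd(h,k)=1) and rh + k ≠ 0, then the rational number h/(rh+k) (written in the normalized form h'/k' with k' > 0, gcd(h',k') = 1) again lies in S_α; the same holds for the rational h/(k − rh) whenever k − rh ≠ 0. That is, the generator M_r = (1 0; r 1) of G_α and its inverse map S_α into S_α. -/

import Mathlib

/-- `S`: rationals with odd numerator (in lowest terms, positive denominator). -/
def Sprop (x : ℚ) : Prop := Odd x.num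

/-- `S_{C1} = {h/k ∈ S : C ∤ h}`. -/
def SC1 (C : ℕ) (x : ℚ) : Prop := Sprop x ∧ ¬ ((C:ℤ) ∣ x.num)

/-- `S_{C2} = {h/k ∈ S : C ∤ 2h}`. -/
def SC2 (C : ℕ) (x : ℚ) : Prop := Sprop x ∧ ¬ ((C:ℤ) ∣ 2 * x.num)

/-- `S_ev = {h/k ∈ S_{C1} : k even}`. -/
def Sev (C : ℕ) (x : ℚ) : Prop := SC1 C x ∧ 2 ∣ x.den

/-- The quantum set `S_α`. -/
def SalphaQ (a : ℤ) (C : ℕ) (x : ℚ) : Prop :=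
  if Even a then SC1 C x else SC2 C x ∨ Sev C x

/-!
Membership of `x` in `S_α` only depends on `x.num` up to sign and, when `a` is odd, on the parity
of `x.den`. For `h` coprime to `d ≠ 0` the fraction `h / d` is already reduced up to sign, so its
numerator is `±h` and its denominator is `|d|`. Moreover `k ± r h` stays coprime to `h`, and when
`a` is odd we have `r = 2`, so `k ± r h` has the parity of `k`.
-/

theorem Rat.num_intCast_div_intCast_of_isCoprime {h d : ℤ} (hc : IsCoprime h d) :
    ((h : ℚ) / d).num = d.sign * h := by
  rw [← Rat.divInt_eq_div, Rat.num_divInt, Int.gcd_comm, Int.isCoprime_iff_gcd_eq_one.mp hc]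
  simp

theorem Rat.den_intCast_div_intCast_of_isCoprime {h d : ℤ} (hd : d ≠ 0) (hc : IsCoprime h d) :
    ((h : ℚ) / d).den = d.natAbs := by
  rw [← Rat.divInt_eq_div, Rat.den_divInt, Int.gcd_comm, Int.isCoprime_iff_gcd_eq_one.mp hc]
  simp [hd]

theorem Rat.natAbs_num_intCast_div_intCast_of_isCoprime {h d : ℤ} (hd : d ≠ 0)
    (hc : IsCoprime h d) : ((h : ℚ) / d).num.natAbs = h.natAbs := by
  rw [Rat.num_intCast_div_intCast_of_isCoprime hc, Int.natAbs_mul,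
    Int.natAbs_sign_of_ne_zero hd, one_mul]

theorem SalphaQ.of_natAbs_num_eq {a : ℤ} {C : ℕ} {x y : ℚ}
    (hnum : x.num.natAbs = y.num.natAbs) (hden : ¬ Even a → 2 ∣ y.den → 2 ∣ x.den)
    (hy : SalphaQ a C y) : SalphaQ a C x := by
  unfold SalphaQ Sev SC2 SC1 Sprop at *
  split_ifs at * with ha
  · rcases Int.natAbs_eq_natAbs_iff.mp hnum with e | e <;> simpa [e] using hy
  · rcases Int.natAbs_eq_natAbs_iff.mp hnum with e | e <;>
      simp only [e, odd_neg, dvd_neg, mul_neg] <;> exact hy.imp id (And.imp_right (hden ha))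

theorem SalphaQ.div_of_isCoprime {a : ℤ} {C : ℕ} {h k d : ℤ} (hk : k ≠ 0) (hd : d ≠ 0)
    (hhk : IsCoprime h k) (hhd : IsCoprime h d) (hpar : ¬ Even a → 2 ∣ k → 2 ∣ d)
    (hS : SalphaQ a C ((h : ℚ) / k)) : SalphaQ a C ((h : ℚ) / d) := by
  refine hS.of_natAbs_num_eq ?_ fun ha h2k => ?_
  · rw [Rat.natAbs_num_intCast_div_intCast_of_isCoprime hd hhd,
      Rat.natAbs_num_intCast_div_intCast_of_isCoprime hk hhk]
  · rw [Rat.den_intCast_div_intCast_of_isCoprime hd hhd, ← Int.ofNat_dvd_left]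
    rw [Rat.den_intCast_div_intCast_of_isCoprime hk hhk, ← Int.ofNat_dvd_left] at h2k
    exact hpar ha h2k

theorem stmt9 (a : ℤ) (C : ℕ)
    (r : ℤ) (hr : r = if Even a then 1 else 2)
    (h k : ℤ) (hk : 0 < k) (hhk : Int.gcd h k = 1)
    (hS : SalphaQ a C ((h:ℚ)/(k:ℚ))) :
    (r*h + k ≠ 0 → SalphaQ a C ((h:ℚ)/((r*h + k : ℤ):ℚ))) ∧
    (k - r*h ≠ 0 → SalphaQ a C ((h:ℚ)/((k - r*h : ℤ):ℚ))) := by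
  have hcop : IsCoprime h k := Int.isCoprime_iff_gcd_eq_one.mpr hhk
  have hr2 : ¬ Even a → r = 2 := fun ha => by rw [hr, if_neg ha]
  refine ⟨fun hne => hS.div_of_isCoprime hk.ne' hne hcop ?_ ?_,
    fun hne => hS.div_of_isCoprime hk.ne' hne hcop ?_ ?_⟩
  · simpa [add_comm, mul_comm] using hcop.add_mul_left_right r
  · intro ha h2k
    rw [hr2 ha]
    exact (dvd_mul_right 2 h).add h2k
  · simpa [sub_eq_add_neg, mul_comm] using hcop.add_mul_left_right (-r)
  · intro ha h2k
    rw [hr2 ha]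
    exact h2k.sub (dvd_mul_right 2 h)
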